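/- Let $u, v$ be smooth positive functions on a domain in $\mathbb{C}$ and suppose at a point $p$: $-2\partial_z\partial_{\bar z}\log u(p) = u(p) S_h$, $-2\partial_z\partial_{\bar z}\log v(p) = v(p) S_g$, and $-2\partial_z\partial_{\bar z}\log(u+v)(p) = (u+v)(p) S$, where $S_h \leq -K_1 < 0$ and $S_g \leq -K_2 < 0$. Then $S \leq -\frac{K_1 K_2}{K_1 + K_2}$. -/

import Mathlib

open Complex

/-- Wirtinger derivative `∂_z f = ½(∂_x f - i ∂_y f)`. -/
noncomputable def wdz (f : ℂ → ℂ) (z : ℂ) : ℂ :=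
  (1 / 2) * (fderiv ℝ f z 1 - Complex.I * fderiv ℝ f z Complex.I)

/-- Wirtinger derivative `∂_z̄ f = ½(∂_x f + i ∂_y f)`. -/
noncomputable def wdzbar (f : ℂ → ℂ) (z : ℂ) : ℂ :=
  (1 / 2) * (fderiv ℝ f z 1 + Complex.I * fderiv ℝ f z Complex.I)

/-- `∂_z ∂_z̄ f`. -/
noncomputable def lapC (f : ℂ → ℂ) (z : ℂ) : ℂ := wdz (fun w => wdzbar f w) z

lemma wdz_of {f : ℂ → ℂ} {f' : ℂ →L[ℝ] ℂ} {z : ℂ} (h : HasFDerivAt f f' z) :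
    wdz f z = (1 / 2) * (f' 1 - Complex.I * f' Complex.I) := by
  rw [wdz, h.fderiv]

lemma wdzbar_of {f : ℂ → ℂ} {f' : ℂ →L[ℝ] ℂ} {z : ℂ} (h : HasFDerivAt f f' z) :
    wdzbar f z = (1 / 2) * (f' 1 + Complex.I * f' Complex.I) := by
  rw [wdzbar, h.fderiv]

lemma diff_wdzbar {D : Set ℂ} (hD : IsOpen D) {f : ℂ → ℂ} (hf : ContDiffOn ℝ (⊤ : ℕ∞) f D)
    {z : ℂ} (hz : z ∈ D) : DifferentiableAt ℝ (fun w => wdzbar f w) z := by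
  have h1 : ContDiffOn ℝ 1 (fderiv ℝ f) D := hf.fderiv_of_isOpen hD (WithTop.coe_le_coe.2 le_top)
  have hdF : DifferentiableAt ℝ (fderiv ℝ f) z :=
    (h1.contDiffAt (hD.mem_nhds hz)).differentiableAt one_ne_zero
  have e1 : DifferentiableAt ℝ (fun w => fderiv ℝ f w 1) z :=
    hdF.clm_apply (differentiableAt_const _)
  have e2 : DifferentiableAt ℝ (fun w => fderiv ℝ f w Complex.I) z :=
    hdF.clm_apply (differentiableAt_const _)
  exact (e1.add (e2.const_mul Complex.I)).const_mul _
lemma wdzbar_conj {D : Set ℂ} (hD : IsOpen D) {f : ℂ → ℂ}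
    (him : ∀ z ∈ D, (f z).im = 0) {p : ℂ} (hp : p ∈ D)
    (hdiff : DifferentiableAt ℝ f p) :
    wdzbar f p = (starRingEnd ℂ) (wdz f p) := by
  have hzero : ∀ v : ℂ, (fderiv ℝ f p v).im = 0 := by
    intro v
    have h1 : HasFDerivAt (fun w => (f w).im) (Complex.imCLM.comp (fderiv ℝ f p)) p :=
      Complex.imCLM.hasFDerivAt.comp p hdiff.hasFDerivAt
    have h2 : HasFDerivAt (fun w => (f w).im) (0 : ℂ →L[ℝ] ℝ) p := by
      refine (hasFDerivAt_const (0 : ℝ) p).congr_of_eventuallyEq ?_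
      filter_upwards [hD.mem_nhds hp] with w hw using him w hw
    have := h1.unique h2
    have := congrArg (fun (L : ℂ →L[ℝ] ℝ) => L v) this
    simpa using this
  have hA := hzero 1
  have hB := hzero Complex.I
  rw [wdz, wdzbar, map_mul, map_sub, map_mul, Complex.conj_I,
    Complex.conj_eq_iff_im.2 hA, Complex.conj_eq_iff_im.2 hB]
  simp only [map_div₀, map_one, map_ofNat]
  ring

lemma key_log {D : Set ℂ} (hD : IsOpen D) {f : ℂ → ℂ} (hf : ContDiffOn ℝ (⊤ : ℕ∞) f D)
    (hreal : ∀ z ∈ D, (f z).im = 0 ∧ 0 < (f z).re) {p : ℂ} (hp : p ∈ D) :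
    (f p) ^ 2 * lapC (fun w => Complex.log (f w)) p
      = f p * lapC f p - wdz f p * wdzbar f p := by
  have hne : ∀ z ∈ D, f z ≠ 0 := by
    intro z hz h
    have := (hreal z hz).2
    rw [h] at this
    simp at this
  have hslit : ∀ z ∈ D, f z ∈ Complex.slitPlane := fun z hz =>
    Complex.mem_slitPlane_iff.2 (Or.inl (hreal z hz).2)
  have hdiff : ∀ z ∈ D, DifferentiableAt ℝ f z := fun z hz =>
    (hf.contDiffAt (hD.mem_nhds hz)).differentiableAt (by simp)
  -- step 1 : wdzbar of log
  have eq1 : ∀ z ∈ D, wdzbar (fun w => Complex.log (f w)) z = (f z)⁻¹ * wdzbar f z := by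
    intro z hz
    have hlog : HasFDerivAt (fun w => Complex.log (f w))
        (((f z)⁻¹ • (1 : ℂ →L[ℝ] ℂ)).comp (fderiv ℝ f z)) z :=
      ((Complex.hasStrictFDerivAt_log_real (hslit z hz)).hasFDerivAt).comp z
        (hdiff z hz).hasFDerivAt
    rw [wdzbar_of hlog, wdzbar]
    simp only [ContinuousLinearMap.coe_comp', Function.comp_apply,
      ContinuousLinearMap.smul_apply, ContinuousLinearMap.one_apply, smul_eq_mul]
    ring
  -- step 2 : reduce lapC of log to wdz of the quotient
  have eq2 : lapC (fun w => Complex.log (f w)) p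
      = wdz (fun w => (f w)⁻¹ * wdzbar f w) p := by
    have hev : (fun w => wdzbar (fun t => Complex.log (f t)) w)
        =ᶠ[nhds p] (fun w => (f w)⁻¹ * wdzbar f w) := by
      filter_upwards [hD.mem_nhds hp] with w hw using eq1 w hw
    rw [lapC, wdz, wdz, hev.fderiv_eq]
  rw [eq2]
  -- step 3 : compute the derivative of the quotient
  have hFd := (diff_wdzbar hD hf hp).hasFDerivAt
  have hinv : HasFDerivAt (fun w => (f w)⁻¹)
      (((-((f p) ^ 2)⁻¹) • (1 : ℂ →L[ℝ] ℂ)).comp (fderiv ℝ f p)) p :=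
    ((hasDerivAt_inv (hne p hp)).complexToReal_fderiv).comp p (hdiff p hp).hasFDerivAt
  have hmul := hinv.fun_mul hFd
  rw [wdz_of hmul]
  have hlap : lapC f p = (1 / 2) * (fderiv ℝ (fun w => wdzbar f w) p 1
      - Complex.I * fderiv ℝ (fun w => wdzbar f w) p Complex.I) := rfl
  rw [hlap, wdz, wdzbar]
  simp only [ContinuousLinearMap.add_apply, ContinuousLinearMap.smul_apply,
    ContinuousLinearMap.coe_comp', Function.comp_apply, ContinuousLinearMap.one_apply,
    smul_eq_mul]
  field_simp [hne p hp]
  ring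

lemma wdz_add {g h : ℂ → ℂ} {z : ℂ} (hg : DifferentiableAt ℝ g z)
    (hh : DifferentiableAt ℝ h z) :
    wdz (fun w => g w + h w) z = wdz g z + wdz h z := by
  unfold wdz
  rw [fderiv_fun_add hg hh]
  simp only [ContinuousLinearMap.add_apply]
  ring

lemma wdzbar_add {g h : ℂ → ℂ} {z : ℂ} (hg : DifferentiableAt ℝ g z)
    (hh : DifferentiableAt ℝ h z) :
    wdzbar (fun w => g w + h w) z = wdzbar g z + wdzbar h z := by
  unfold wdzbar
  rw [fderiv_fun_add hg hh]
  simp only [ContinuousLinearMap.add_apply]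
  ring

lemma lapC_add {D : Set ℂ} (hD : IsOpen D) {u v : ℂ → ℂ}
    (hu : ContDiffOn ℝ (⊤ : ℕ∞) u D) (hv : ContDiffOn ℝ (⊤ : ℕ∞) v D) {p : ℂ} (hp : p ∈ D) :
    lapC (fun w => u w + v w) p = lapC u p + lapC v p := by
  have hdiff : ∀ f : ℂ → ℂ, ContDiffOn ℝ (⊤ : ℕ∞) f D → ∀ z ∈ D, DifferentiableAt ℝ f z :=
    fun f hf z hz => (hf.contDiffAt (hD.mem_nhds hz)).differentiableAt (by simp)
  have hev : (fun w => wdzbar (fun t => u t + v t) w)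
      =ᶠ[nhds p] (fun w => wdzbar u w + wdzbar v w) := by
    filter_upwards [hD.mem_nhds hp] with z hz using
      wdzbar_add (hdiff u hu z hz) (hdiff v hv z hz)
  rw [lapC, wdz, hev.fderiv_eq, ← wdz]
  exact wdz_add (diff_wdzbar hD hu hp) (diff_wdzbar hD hv hp)

theorem stmt_9 (D : Set ℂ) (hD : IsOpen D) (u v : ℂ → ℂ)
    (hu : ContDiffOn ℝ (⊤ : ℕ∞) u D) (hv : ContDiffOn ℝ (⊤ : ℕ∞) v D)
    (hureal : ∀ z ∈ D, (u z).im = 0 ∧ 0 < (u z).re)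
    (hvreal : ∀ z ∈ D, (v z).im = 0 ∧ 0 < (v z).re)
    (p : ℂ) (hp : p ∈ D) (Sh Sg S K1 K2 : ℝ)
    (hSh : -2 * lapC (fun w => Complex.log (u w)) p = u p * (Sh : ℂ))
    (hSg : -2 * lapC (fun w => Complex.log (v w)) p = v p * (Sg : ℂ))
    (hS : -2 * lapC (fun w => Complex.log (u w + v w)) p = (u p + v p) * (S : ℂ))
    (hK1 : 0 < K1) (hK2 : 0 < K2) (hSh' : Sh ≤ -K1) (hSg' : Sg ≤ -K2) :
    S ≤ -(K1 * K2 / (K1 + K2)) := by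
  have hdiffu : DifferentiableAt ℝ u p :=
    (hu.contDiffAt (hD.mem_nhds hp)).differentiableAt (by simp)
  have hdiffv : DifferentiableAt ℝ v p :=
    (hv.contDiffAt (hD.mem_nhds hp)).differentiableAt (by simp)
  have huv : ContDiffOn ℝ (⊤ : ℕ∞) (fun w => u w + v w) D := hu.add hv
  have huvreal : ∀ z ∈ D, ((fun w => u w + v w) z).im = 0
      ∧ 0 < ((fun w => u w + v w) z).re := by
    intro z hz
    obtain ⟨h1, h2⟩ := hureal z hz
    obtain ⟨h3, h4⟩ := hvreal z hz
    refine ⟨by simp [h1, h3], by simp only [Complex.add_re]; linarith⟩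
  set A := (u p).re with hAdef
  set B := (v p).re with hBdef
  have hA0 : 0 < A := (hureal p hp).2
  have hB0 : 0 < B := (hvreal p hp).2
  have hupA : u p = (A : ℂ) := by
    apply Complex.ext <;> simp [(hureal p hp).1, hAdef]
  have hvpB : v p = (B : ℂ) := by
    apply Complex.ext <;> simp [(hvreal p hp).1, hBdef]
  set α := wdz u p with hαdef
  set β := wdz v p with hβdef
  set Lu := lapC u p with hLudef
  set Lv := lapC v p with hLvdef
  have hconju : wdzbar u p = (starRingEnd ℂ) α :=
    wdzbar_conj hD (fun z hz => (hureal z hz).1) hp hdiffu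
  have hconjv : wdzbar v p = (starRingEnd ℂ) β :=
    wdzbar_conj hD (fun z hz => (hvreal z hz).1) hp hdiffv
  have hwdzsum : wdz (fun w => u w + v w) p = α + β := wdz_add hdiffu hdiffv
  have hwdzbarsum : wdzbar (fun w => u w + v w) p = wdzbar u p + wdzbar v p :=
    wdzbar_add hdiffu hdiffv
  have hlapsum : lapC (fun w => u w + v w) p = Lu + Lv := lapC_add hD hu hv hp
  have keyU : (u p) ^ 2 * lapC (fun w => Complex.log (u w)) p
      = u p * lapC u p - wdz u p * wdzbar u p := key_log hD hu hureal hp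
  have keyV : (v p) ^ 2 * lapC (fun w => Complex.log (v w)) p
      = v p * lapC v p - wdz v p * wdzbar v p := key_log hD hv hvreal hp
  have keyS : (u p + v p) ^ 2 * lapC (fun w => Complex.log (u w + v w)) p
      = (u p + v p) * lapC (fun w => u w + v w) p
        - wdz (fun w => u w + v w) p * wdzbar (fun w => u w + v w) p :=
    key_log hD huv huvreal hp
  rw [hupA, hconju, ← hLudef, ← hαdef] at keyU
  rw [hvpB, hconjv, ← hLvdef, ← hβdef] at keyV
  rw [hwdzsum, hwdzbarsum, hlapsum, hconju, hconjv, hupA, hvpB] at keyS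
  rw [hupA] at hSh
  rw [hvpB] at hSg
  rw [hupA, hvpB] at hS
  have haC : (A : ℂ) ≠ 0 := by exact_mod_cast hA0.ne'
  have hbC : (B : ℂ) ≠ 0 := by exact_mod_cast hB0.ne'
  have habC : (A : ℂ) + (B : ℂ) ≠ 0 := by
    have : (0:ℝ) < A + B := by linarith
    exact_mod_cast this.ne'
  have e1 : (-2 : ℂ) * ((A : ℂ) * Lu - α * (starRingEnd ℂ) α) = (A : ℂ) ^ 3 * Sh := by
    linear_combination (A : ℂ) ^ 2 * hSh + 2 * keyU
  have e2 : (-2 : ℂ) * ((B : ℂ) * Lv - β * (starRingEnd ℂ) β) = (B : ℂ) ^ 3 * Sg := by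
    linear_combination (B : ℂ) ^ 2 * hSg + 2 * keyV
  have e3 : (-2 : ℂ) * (((A : ℂ) + B) * (Lu + Lv)
      - (α + β) * ((starRingEnd ℂ) α + (starRingEnd ℂ) β)) = ((A : ℂ) + B) ^ 3 * S := by
    linear_combination ((A : ℂ) + B) ^ 2 * hS + 2 * keyS
  have hcw : (A : ℂ) * (starRingEnd ℂ) β - (B : ℂ) * (starRingEnd ℂ) α
      = (starRingEnd ℂ) ((A : ℂ) * β - (B : ℂ) * α) := by
    simp [map_sub, map_mul, Complex.conj_ofReal]
  have main : ((A : ℂ) * B * ((A : ℂ) + B))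
      * ((A : ℂ) ^ 2 * Sh + (B : ℂ) ^ 2 * Sg - ((A : ℂ) + B) ^ 2 * S)
      = 2 * (((A : ℂ) * β - (B : ℂ) * α)
          * ((A : ℂ) * (starRingEnd ℂ) β - (B : ℂ) * (starRingEnd ℂ) α)) := by
    linear_combination (-((B : ℂ) * ((A : ℂ) + B))) * e1 - ((A : ℂ) * ((A : ℂ) + B)) * e2
      + ((A : ℂ) * B) * e3
  rw [hcw, Complex.mul_conj] at main
  have mainR : (A * B * (A + B)) * (A ^ 2 * Sh + B ^ 2 * Sg - (A + B) ^ 2 * S)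
      = 2 * Complex.normSq ((A : ℂ) * β - (B : ℂ) * α) := by
    exact_mod_cast main
  have hQ : 0 ≤ A ^ 2 * Sh + B ^ 2 * Sg - (A + B) ^ 2 * S := by
    have hP : 0 < A * B * (A + B) := by positivity
    nlinarith [Complex.normSq_nonneg ((A : ℂ) * β - (B : ℂ) * α), mainR, hP]
  have hK : 0 < K1 + K2 := by linarith
  rw [show -(K1 * K2 / (K1 + K2)) = (-(K1 * K2)) / (K1 + K2) by ring, le_div_iff₀ hK]
  nlinarith [hQ, sq_nonneg (A * K1 - B * K2),
    mul_nonneg (sq_nonneg A) (by linarith : (0:ℝ) ≤ -K1 - Sh),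
    mul_nonneg (sq_nonneg B) (by linarith : (0:ℝ) ≤ -K2 - Sg),
    mul_pos hA0 hB0, sq_nonneg (A + B), hK]
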